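/- Let p ∈ [2, ∞), q = p/(p−1), and B > 0. Let Y ∈ ℝ^d with ‖Y‖_q ≤ B, and let Q(Y) be the average of k = d^{2/p} (assumed a positive integer) independent copies of SimQ applied to Y with scale parameter B·d^{1/p} (i.e., each copy outputs B·d^{1/p}·sign(Y(i))·e_i with probability |Y(i)|/(B·d^{1/p}), and 0 otherwise). Then E[Q(Y)] = Y and E[‖Q(Y)‖₂²] ≤ (d^{2/p}·B²)/k + B² = 2B². -/

import Mathlib

/-!
With `M = B d^{1/p}`, one SimQ sample `X` is unbiased, and `‖X‖ = M` exactly on the event that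
some coordinate is drawn, an event of probability `‖Y‖₁ / M`; hence `E‖X‖² = M ‖Y‖₁`.
For the average of `k` pairwise independent copies, additivity of variance in each coordinate
gives `E‖Q‖² ≤ E‖X‖² / k + ‖Y‖₂²`. Finally Hölder's inequality gives `‖Y‖₁ ≤ d^{1/p} ‖Y‖_q`,
and `‖Y‖₂ ≤ ‖Y‖_q` because `q ≤ 2`.
-/

open MeasureTheory ProbabilityTheory

/-- Discrete σ-algebra on the finite index alphabet. -/
instance (n : ℕ) : MeasurableSpace (Option (Fin n)) := ⊤

open Finset

section NormInequalities

variable {ι : Type*}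

lemma sum_rpow_le_rpow_sum (s : Finset ι) {a : ι → ℝ} (ha : ∀ i, 0 ≤ a i) {t : ℝ}
    (ht : 1 ≤ t) : ∑ i ∈ s, a i ^ t ≤ (∑ i ∈ s, a i) ^ t := by
  induction s using Finset.cons_induction with
  | empty => simp [Real.zero_rpow (by linarith : t ≠ 0)]
  | cons i s hi ih =>
    rw [sum_cons, sum_cons]
    calc a i ^ t + ∑ j ∈ s, a j ^ t ≤ a i ^ t + (∑ j ∈ s, a j) ^ t := by gcongr
      _ ≤ (a i + ∑ j ∈ s, a j) ^ t :=
        Real.add_rpow_le_rpow_add (ha i) (sum_nonneg fun j _ => ha j) ht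

variable [Fintype ι]

lemma sum_sq_le_Lq_sq (x : ι → ℝ) {q : ℝ} (hq : 0 < q) (hq2 : q ≤ 2) :
    ∑ i, x i ^ 2 ≤ ((∑ i, |x i| ^ q) ^ (1 / q)) ^ 2 := by
  have hS : 0 ≤ ∑ i, |x i| ^ q := sum_nonneg fun i _ => by positivity
  calc ∑ i, x i ^ 2 = ∑ i, (|x i| ^ q) ^ (2 / q) := by
        refine sum_congr rfl fun i _ => ?_
        rw [← Real.rpow_mul (abs_nonneg _), mul_div_cancel₀ _ hq.ne', Real.rpow_two, sq_abs]
    _ ≤ (∑ i, |x i| ^ q) ^ (2 / q) :=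
        sum_rpow_le_rpow_sum _ (fun i => by positivity) ((one_le_div hq).2 hq2)
    _ = ((∑ i, |x i| ^ q) ^ (1 / q)) ^ 2 := by
        rw [← Real.rpow_two, ← Real.rpow_mul hS]
        ring_nf

lemma sum_abs_le_card_rpow_mul_Lq (x : ι → ℝ) {p q : ℝ} (hpq : p.HolderConjugate q) :
    ∑ i, |x i| ≤ (Fintype.card ι : ℝ) ^ (1 / p) * (∑ i, |x i| ^ q) ^ (1 / q) := by
  simpa using Real.inner_le_Lp_mul_Lq_of_nonneg univ hpq (f := fun _ => 1)
    (g := fun i => |x i|) (fun _ _ => zero_le_one) (fun i _ => abs_nonneg (x i))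

end NormInequalities

section Averaging

variable {Ω κ : Type*} [MeasurableSpace Ω] {μ : Measure Ω} [IsProbabilityMeasure μ]

lemma integral_sq_average_le {s : Finset κ} (hs : s.Nonempty) {X : κ → Ω → ℝ}
    (hX : ∀ j ∈ s, MemLp (X j) 2 μ) (hindep : Set.Pairwise s fun i j => X i ⟂ᵢ[μ] X j)
    {m : ℝ} (hm : ∀ j ∈ s, μ[X j] = m) :
    ∫ ω, ((#s : ℝ)⁻¹ * ∑ j ∈ s, X j ω) ^ 2 ∂μ
      ≤ ((#s : ℝ)⁻¹) ^ 2 * ∑ j ∈ s, ∫ ω, X j ω ^ 2 ∂μ + m ^ 2 := by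
  set c : ℝ := (#s : ℝ)⁻¹
  have hA : MemLp (fun ω => c * (∑ j ∈ s, X j) ω) 2 μ := (memLp_finsetSum' s hX).const_mul c
  have hmean : μ[fun ω => c * (∑ j ∈ s, X j) ω] = m := by
    simp_rw [Finset.sum_apply]
    rw [integral_const_mul, integral_finsetSum _ fun j hj => (hX j hj).integrable one_le_two,
      sum_congr rfl hm, sum_const, nsmul_eq_mul, ← mul_assoc,
      inv_mul_cancel₀ (by exact_mod_cast hs.card_ne_zero), one_mul]
  have hvar : Var[fun ω => c * (∑ j ∈ s, X j) ω; μ] ≤ c ^ 2 * ∑ j ∈ s, ∫ ω, X j ω ^ 2 ∂μ := by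
    rw [variance_const_mul, IndepFun.variance_sum hX hindep]
    gcongr with j hj
    exact variance_le_expectation_sq (hX j hj).aestronglyMeasurable
  have hsq := variance_eq_sub hA
  simp only [Pi.pow_apply, hmean] at hsq
  simp only [Finset.sum_apply] at hsq hvar
  linarith

lemma integral_norm_sq_average_le {ι : Type*} [Fintype ι] {s : Finset κ} (hs : s.Nonempty)
    {X : κ → Ω → EuclideanSpace ℝ ι} (hX : ∀ j ∈ s, MemLp (X j) 2 μ)
    (hindep : Set.Pairwise s fun i j => X i ⟂ᵢ[μ] X j) {m : EuclideanSpace ℝ ι}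
    (hm : ∀ j ∈ s, μ[X j] = m) :
    ∫ ω, ‖(#s : ℝ)⁻¹ • ∑ j ∈ s, X j ω‖ ^ 2 ∂μ
      ≤ ((#s : ℝ)⁻¹) ^ 2 * ∑ j ∈ s, ∫ ω, ‖X j ω‖ ^ 2 ∂μ + ‖m‖ ^ 2 := by
  have hcoord (j) (hj : j ∈ s) (l : ι) : MemLp (fun ω => X j ω l) 2 μ := (hX j hj).eval_piLp l
  have hcoord_sq (l : ι) : ∫ ω, ((#s : ℝ)⁻¹ * ∑ j ∈ s, X j ω l) ^ 2 ∂μ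
      ≤ ((#s : ℝ)⁻¹) ^ 2 * ∑ j ∈ s, ∫ ω, X j ω l ^ 2 ∂μ + m l ^ 2 := by
    refine integral_sq_average_le hs (fun j hj => hcoord j hj l) ?_ fun j hj => ?_
    · have hproj : Measurable fun v : EuclideanSpace ℝ ι => v l := by fun_prop
      exact fun i hi j hj hij => (hindep hi hj hij).comp hproj hproj
    · rw [← hm j hj, eval_integral_piLp fun l => (hcoord j hj l).integrable one_le_two]
  simp only [EuclideanSpace.real_norm_sq_eq, PiLp.smul_apply, WithLp.ofLp_sum, Finset.sum_apply,
    smul_eq_mul]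
  rw [integral_finsetSum _ fun l _ =>
    ((memLp_finsetSum s fun j hj => hcoord j hj l).const_mul _).integrable_sq]
  rw [sum_congr rfl fun j hj => integral_finsetSum _ fun l _ => (hcoord j hj l).integrable_sq,
    sum_comm, mul_sum, ← sum_add_distrib]
  exact sum_le_sum fun l _ => hcoord_sq l

end Averaging

section SimQ

instance (n : ℕ) : DiscreteMeasurableSpace (Option (Fin n)) := ⟨fun _ => trivial⟩

lemma abs_mul_ite_nonneg_one_neg_one (x : ℝ) : |x| * (if 0 ≤ x then 1 else -1) = x := by
  split_ifs with hx
  · simp [abs_of_nonneg hx]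
  · simp [abs_of_neg (not_le.1 hx)]

variable {Ω : Type*} [MeasurableSpace Ω] {μ : Measure Ω}

lemma integral_comp_eq_sum_measureReal [IsFiniteMeasure μ] {α E : Type*} [Fintype α]
    [MeasurableSpace α] [DiscreteMeasurableSpace α] [NormedAddCommGroup E] [NormedSpace ℝ E] [CompleteSpace E]
    {X : Ω → α} (hX : Measurable X) (f : α → E) :
    ∫ ω, f (X ω) ∂μ = ∑ a, μ.real (X ⁻¹' {a}) • f a := by
  rw [← integral_map hX.aemeasurable Integrable.of_finite.aestronglyMeasurable,
    integral_fintype Integrable.of_finite]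
  simp [map_measureReal_apply hX (measurableSet_singleton _)]

/-- The output of SimQ with scale `M` once the index `o` is drawn; `none` is the zero outcome. -/
noncomputable def simQ {d : ℕ} (M : ℝ) (Y : EuclideanSpace ℝ (Fin d)) :
    Option (Fin d) → EuclideanSpace ℝ (Fin d) :=
  fun o => Option.elim o 0 fun i => (M * if 0 ≤ Y i then 1 else -1) • EuclideanSpace.single i 1

variable {d : ℕ} {M : ℝ} {Y : EuclideanSpace ℝ (Fin d)}

lemma norm_simQ_some (hM : 0 ≤ M) (i : Fin d) : ‖simQ M Y (some i)‖ = M := by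
  simp [simQ, norm_smul, abs_of_nonneg hM, apply_ite]

section Sample

variable {X : Ω → Option (Fin d)} (hM : 0 < M) (hX : Measurable X)
  (hlaw : ∀ i, μ (X ⁻¹' {some i}) = ENNReal.ofReal (|Y i| / M))
include hM hlaw

lemma measureReal_preimage_some (i : Fin d) : μ.real (X ⁻¹' {some i}) = |Y i| / M := by
  rw [measureReal_def, hlaw, ENNReal.toReal_ofReal (by positivity)]

variable [IsFiniteMeasure μ]
include hX

lemma integral_simQ_comp : ∫ ω, simQ M Y (X ω) ∂μ = Y := by
  rw [integral_comp_eq_sum_measureReal hX, Fintype.sum_option]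
  simp only [measureReal_preimage_some hM hlaw, simQ, Option.elim, smul_zero, zero_add,
    smul_smul]
  simp_rw [← mul_assoc, div_mul_cancel₀ _ hM.ne', abs_mul_ite_nonneg_one_neg_one]
  simpa [EuclideanSpace.basisFun_apply] using (EuclideanSpace.basisFun (Fin d) ℝ).sum_repr Y

lemma integral_norm_simQ_comp_sq : ∫ ω, ‖simQ M Y (X ω)‖ ^ 2 ∂μ = M * ∑ i, |Y i| := by
  rw [integral_comp_eq_sum_measureReal hX (fun o => ‖simQ M Y o‖ ^ 2), Fintype.sum_option]
  simp only [measureReal_preimage_some hM hlaw, norm_simQ_some hM.le, smul_eq_mul, mul_sum]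
  simp only [simQ, Option.elim, norm_zero, zero_pow two_ne_zero, mul_zero, zero_add]
  refine sum_congr rfl fun i _ => ?_
  field_simp

end Sample

variable (hM : 0 < M) {k : ℕ} {I : Fin k → Ω → Option (Fin d)}
  (hmeas : ∀ j, Measurable (I j))
  (hlaw : ∀ j i, μ (I j ⁻¹' {some i}) = ENNReal.ofReal (|Y i| / M))
include hM hmeas hlaw

lemma integral_simQ_average [IsFiniteMeasure μ] (hk : 0 < k) :
    ∫ ω, (k : ℝ)⁻¹ • ∑ j, simQ M Y (I j ω) ∂μ = Y := by
  have hint (j) : Integrable (fun ω => simQ M Y (I j ω)) μ :=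
    (Integrable.of_finite (f := simQ M Y)).comp_measurable (hmeas j)
  rw [integral_smul, integral_finsetSum _ fun j _ => hint j,
    sum_congr rfl fun j _ => integral_simQ_comp hM (hmeas j) (hlaw j), sum_const, card_univ,
    Fintype.card_fin, ← Nat.cast_smul_eq_nsmul ℝ, smul_smul, inv_mul_cancel₀ (by positivity),
    one_smul]

lemma integral_norm_sq_simQ_average_le [IsProbabilityMeasure μ] (hk : 0 < k)
    (hindep : iIndepFun I μ) :
    ∫ ω, ‖(k : ℝ)⁻¹ • ∑ j, simQ M Y (I j ω)‖ ^ 2 ∂μ ≤ M * (∑ i, |Y i|) / k + ‖Y‖ ^ 2 := calc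
  _ ≤ ((k : ℝ)⁻¹) ^ 2 * ∑ j, ∫ ω, ‖simQ M Y (I j ω)‖ ^ 2 ∂μ + ‖Y‖ ^ 2 := by
    simpa only [card_univ, Fintype.card_fin] using
      integral_norm_sq_average_le (X := fun j ω => simQ M Y (I j ω))
        (Finset.univ_nonempty_iff.2 ⟨⟨0, hk⟩⟩)
        (fun j _ => (MemLp.of_discrete (f := simQ M Y)).comp_of_map (hmeas j).aemeasurable)
        (fun i _ j _ hij => (hindep.indepFun hij).comp (φ := simQ M Y) (ψ := simQ M Y)
          Measurable.of_discrete Measurable.of_discrete)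
        (fun j _ => integral_simQ_comp hM (hmeas j) (hlaw j))
  _ = M * (∑ i, |Y i|) / k + ‖Y‖ ^ 2 := by
    simp only [integral_norm_simQ_comp_sq hM (hmeas _) (hlaw _), sum_const, card_univ,
      Fintype.card_fin, nsmul_eq_mul]
    field_simp

end SimQ

theorem simq_plus_general
    (d k : ℕ) (hd : 0 < d) (hk : 0 < k) (p : ℝ) (hp : 2 ≤ p)
    (q B : ℝ) (hq : q = p / (p - 1)) (hB : 0 < B)
    (hkd : (k : ℝ) = (d : ℝ) ^ (2 / p))
    (Y : EuclideanSpace ℝ (Fin d)) (hY : (∑ i, |Y i| ^ q) ^ (1 / q) ≤ B)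
    {Ω : Type*} [MeasurableSpace Ω] (μ : Measure Ω) [IsProbabilityMeasure μ]
    (I : Fin k → Ω → Option (Fin d))
    (hmeas : ∀ j, Measurable (I j))
    (hindep : iIndepFun I μ)
    (hI : ∀ j, ∀ i : Fin d,
      μ (I j ⁻¹' {some i}) = ENNReal.ofReal (|Y i| / (B * (d : ℝ) ^ (1 / p))))
    (Q : Ω → EuclideanSpace ℝ (Fin d))
    (hQ : ∀ ω, Q ω = (k : ℝ)⁻¹ • ∑ j, Option.elim (I j ω) 0
      (fun i => (B * (d : ℝ) ^ (1 / p) * (if 0 ≤ Y i then (1 : ℝ) else -1)) •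
        EuclideanSpace.single i (1 : ℝ))) :
    ∫ ω, Q ω ∂μ = Y
      ∧ ∫ ω, ‖Q ω‖ ^ 2 ∂μ ≤ (d : ℝ) ^ (2 / p) * B ^ 2 / k + B ^ 2
      ∧ ∫ ω, ‖Q ω‖ ^ 2 ∂μ ≤ 2 * B ^ 2 := by
  set M := B * (d : ℝ) ^ (1 / p)
  have hM : 0 < M := by positivity
  have hQX : Q = fun ω => (k : ℝ)⁻¹ • ∑ j, simQ M Y (I j ω) := funext hQ
  have hpq : p.HolderConjugate q := (Real.holderConjugate_iff_eq_conjExponent (by linarith)).2 hq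
  have hq2 : q ≤ 2 := hq ▸ (div_le_iff₀ (by linarith)).2 (by linarith)
  have hl1 : ∑ i, |Y i| ≤ (d : ℝ) ^ (1 / p) * B := calc
    _ ≤ (Fintype.card (Fin d) : ℝ) ^ (1 / p) * (∑ i, |Y i| ^ q) ^ (1 / q) :=
      sum_abs_le_card_rpow_mul_Lq (fun i => Y i) hpq
    _ ≤ (d : ℝ) ^ (1 / p) * B := by rw [Fintype.card_fin]; gcongr
  have hl2 : ‖Y‖ ^ 2 ≤ B ^ 2 := by
    rw [EuclideanSpace.real_norm_sq_eq]
    exact (sum_sq_le_Lq_sq (fun i => Y i) hpq.symm.pos hq2).trans (by gcongr)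
  have h2 : ∫ ω, ‖Q ω‖ ^ 2 ∂μ ≤ (d : ℝ) ^ (2 / p) * B ^ 2 / k + B ^ 2 := by
    rw [hQX]
    refine (integral_norm_sq_simQ_average_le hM hmeas hI hk hindep).trans ?_
    calc M * (∑ i, |Y i|) / k + ‖Y‖ ^ 2 ≤ M * ((d : ℝ) ^ (1 / p) * B) / k + B ^ 2 := by gcongr
      _ = (d : ℝ) ^ (2 / p) * B ^ 2 / k + B ^ 2 := by
        rw [show 2 / p = 1 / p + 1 / p by ring, Real.rpow_add (by positivity)]
        ring
  refine ⟨hQX ▸ integral_simQ_average hM hmeas hI hk, h2, h2.trans_eq ?_⟩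
  rw [← hkd]
  field_simp
  ring

/-- SimQ⁺: the average of `k = d^{2/p}` independent copies of SimQ with scale
`B·d^{1/p}` is unbiased and has second moment at most `d^{2/p}B²/k + B² = 2B²`. -/
theorem simq_plus
    (d k : ℕ) (hd : 0 < d) (hk : 0 < k) (p : ℝ) (hp : 2 ≤ p)
    (q B : ℝ) (hq : q = p / (p - 1)) (hB : 0 < B)
    (hkd : (k : ℝ) = (d : ℝ) ^ (2 / p))
    (Y : EuclideanSpace ℝ (Fin d)) (hY : (∑ i, |Y i| ^ q) ^ (1 / q) ≤ B)
    {Ω : Type*} [MeasurableSpace Ω] (μ : Measure Ω) [IsProbabilityMeasure μ]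
    (I : Fin k → Ω → Option (Fin d))
    (hmeas : ∀ j, Measurable (I j))
    (hindep : iIndepFun I μ)
    (hI : ∀ j, ∀ i : Fin d,
      μ (I j ⁻¹' {some i}) = ENNReal.ofReal (|Y i| / (B * (d : ℝ) ^ (1 / p))))
    (Q : Ω → EuclideanSpace ℝ (Fin d))
    (hQ : ∀ ω, Q ω = (k : ℝ)⁻¹ • ∑ j, Option.elim (I j ω) 0
      (fun i => (B * (d : ℝ) ^ (1 / p) * (if 0 ≤ Y i then (1 : ℝ) else -1)) •
        EuclideanSpace.single i (1 : ℝ)))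
    (hint1 : Integrable Q μ) (hint2 : Integrable (fun ω => ‖Q ω‖ ^ 2) μ) :
    ∫ ω, Q ω ∂μ = Y
      ∧ ∫ ω, ‖Q ω‖ ^ 2 ∂μ ≤ (d : ℝ) ^ (2 / p) * B ^ 2 / k + B ^ 2
      ∧ ∫ ω, ‖Q ω‖ ^ 2 ∂μ ≤ 2 * B ^ 2 :=
  simq_plus_general d k hd hk p hp q B hq hB hkd Y hY μ I hmeas hindep hI Q hQ
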